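/- arXiv:2502.06514 — 2 statements merged into one kernel-verified Lean document; each statement's English description precedes it below -/
import Mathlib

section
/- Fix N ∈ ℕ, 0 ≤ s ≤ T, j ∈ {1,…,N}, σ > 0 and L ≥ 0. Let a^i, c^{i,k} : [s,T] → ℝ (i,k ∈ {1,…,N}) be measurable functions with |a^i(r)| ≤ L and |c^{i,k}(r)| ≤ L for all r, and let d¹,…,d^N : [s,T] → ℝ be continuous functions satisfying, for all t ∈ [s,T], d^i(t) = σ·1_{i=j} + ∫_s^t ( a^i(r) d^i(r) + N^{−1} ∑_{k=1}^N c^{i,k}(r) d^k(r) ) dr. Then there exists a constant C depending only on σ, L and T (not on N, s or j) such that sup_{t∈[s,T]} N^{−1} ∑_{i=1}^N |d^i(t)| ≤ C/N, sup_{t∈[s,T]} |d^j(t)| ≤ C, and sup_{t∈[s,T]} |d^i(t)| ≤ C/N for every i ≠ j. -/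
/-!
Put `S t = ∑ᵢ |dⁱ t|`. Taking absolute values in the equations and using `|aⁱ|, |cⁱᵏ| ≤ L`,
each `|dⁱ|` is dominated by `|dⁱ(s)| + ∫ₛᵗ (L |dⁱ| + L S / N)`. Summed over `i` this gives
`S t ≤ |σ| + 2L ∫ₛᵗ S`, so Grönwall bounds `S` by `|σ| e^{2LT}` uniformly in `N`. Fed back into
a single equation, the coupling term is then `O(1/N)`, and Grönwall for `|dⁱ|` gives
`|dⁱ t| ≤ (|σ| 1_{i=j} + L T |σ| e^{2LT} / N) e^{LT}`.
-/

open MeasureTheory Set Real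

theorem le_mul_exp_of_le_add_mul_integral {f : ℝ → ℝ} {s T A B : ℝ} (hB : 0 ≤ B)
    (hf : ContinuousOn f (Icc s T)) (h : ∀ t ∈ Icc s T, f t ≤ A + B * ∫ r in s..t, f r) :
    ∀ t ∈ Icc s T, f t ≤ A * exp (B * (t - s)) := by
  intro t ht
  have hsT : s ≤ T := ht.1.trans ht.2
  set g : ℝ → ℝ := fun r => f (projIcc s T hsT r)
  have hg : Continuous g :=
    hf.comp_continuous (continuous_subtype_val.comp continuous_projIcc) fun r =>
      (projIcc s T hsT r).2
  have hgf : EqOn g f (Icc s T) := fun r hr => by simp [g, projIcc_of_mem hsT hr]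
  have hint : ∀ x ∈ Icc s T, ∫ r in s..x, g r = ∫ r in s..x, f r := fun x hx =>
    intervalIntegral.integral_congr fun r hr =>
      hgf (Icc_subset_Icc_right hx.2 (uIcc_of_le hx.1 ▸ hr))
  -- `H` is differentiable with `H' = B g ≤ B H`, so the differential Grönwall inequality applies.
  set H : ℝ → ℝ := fun x => A + B * ∫ r in s..x, g r
  have hH : ∀ x, HasDerivAt H (B * g x) x := fun x =>
    ((intervalIntegral.integral_hasDerivAt_right (hg.intervalIntegrable _ _)
      (hg.stronglyMeasurableAtFilter _ _) hg.continuousAt).const_mul B).const_add A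
  have hgH : ∀ x ∈ Icc s T, g x ≤ H x := fun x hx => by
    simpa only [H, hgf hx, hint x hx] using h x hx
  have hHbound := le_gronwallBound_of_liminf_deriv_right_le (f := H) (δ := A) (ε := 0)
    (fun x _ => (hH x).continuousAt.continuousWithinAt)
    (fun x _ _ hr => (hH x).hasDerivWithinAt.liminf_right_slope_le hr) (by simp [H])
    (fun x hx => by simpa using mul_le_mul_of_nonneg_left (hgH x (Ico_subset_Icc_self hx)) hB)
    t ht
  calc f t = g t := (hgf ht).symm
    _ ≤ H t := hgH t ht
    _ ≤ A * exp (B * (t - s)) := by rwa [gronwallBound_ε0] at hHbound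

section MeanFieldSystem

variable {ι : Type*} [Fintype ι]

noncomputable def meanFieldDrift (a : ι → ℝ → ℝ) (c : ι → ι → ℝ → ℝ) (d : ι → ℝ → ℝ) (i : ι)
    (r : ℝ) : ℝ :=
  a i r * d i r + (Fintype.card ι : ℝ)⁻¹ * ∑ k, c i k r * d k r

def sumAbs (d : ι → ℝ → ℝ) (t : ℝ) : ℝ := ∑ i, |d i t|

noncomputable def driftMajorant (L : ℝ) (d : ι → ℝ → ℝ) (i : ι) (r : ℝ) : ℝ :=
  L * |d i r| + L * ((Fintype.card ι : ℝ)⁻¹ * sumAbs d r)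

variable {s T L : ℝ} {a : ι → ℝ → ℝ} {c : ι → ι → ℝ → ℝ} {d : ι → ℝ → ℝ} {x₀ : ι → ℝ}

theorem sumAbs_nonneg (d : ι → ℝ → ℝ) (t : ℝ) : 0 ≤ sumAbs d t :=
  Finset.sum_nonneg fun _ _ => abs_nonneg _

theorem sum_driftMajorant_le (hL : 0 ≤ L) (r : ℝ) :
    ∑ i, driftMajorant L d i r ≤ 2 * L * sumAbs d r := by
  have hcard : (Fintype.card ι : ℝ) * (Fintype.card ι : ℝ)⁻¹ ≤ 1 := mul_inv_le_one
  have hS := sumAbs_nonneg d r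
  simp only [driftMajorant, Finset.sum_add_distrib, ← Finset.mul_sum, Finset.sum_const,
    Finset.card_univ, nsmul_eq_mul]
  change L * sumAbs d r + _ ≤ _
  nlinarith [mul_le_mul_of_nonneg_right hcard (mul_nonneg hL hS)]

theorem abs_meanFieldDrift_le (hab : ∀ i, ∀ r ∈ Icc s T, |a i r| ≤ L)
    (hcb : ∀ i k, ∀ r ∈ Icc s T, |c i k r| ≤ L) (i : ι) {r : ℝ} (hr : r ∈ Icc s T) :
    |meanFieldDrift a c d i r| ≤ driftMajorant L d i r := by
  have hcoupling : |∑ k, c i k r * d k r| ≤ L * sumAbs d r := by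
    rw [sumAbs, Finset.mul_sum]
    refine (Finset.abs_sum_le_sum_abs _ _).trans (Finset.sum_le_sum fun k _ => ?_)
    rw [abs_mul]
    exact mul_le_mul_of_nonneg_right (hcb i k r hr) (abs_nonneg _)
  calc |meanFieldDrift a c d i r|
      ≤ |a i r * d i r| + |(Fintype.card ι : ℝ)⁻¹ * ∑ k, c i k r * d k r| := abs_add_le _ _
    _ = |a i r| * |d i r| + (Fintype.card ι : ℝ)⁻¹ * |∑ k, c i k r * d k r| := by
        rw [abs_mul, abs_mul, abs_inv, Nat.abs_cast]
    _ ≤ L * |d i r| + (Fintype.card ι : ℝ)⁻¹ * (L * sumAbs d r) := by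
        gcongr
        exact hab i r hr
    _ = driftMajorant L d i r := by rw [driftMajorant]; ring

theorem continuousOn_sumAbs (hd : ∀ i, ContinuousOn (d i) (Icc s T)) :
    ContinuousOn (sumAbs d) (Icc s T) :=
  continuousOn_finsetSum _ fun i _ => (hd i).abs

theorem continuousOn_driftMajorant (hd : ∀ i, ContinuousOn (d i) (Icc s T)) (i : ι) :
    ContinuousOn (driftMajorant L d i) (Icc s T) :=
  (continuousOn_const.mul (hd i).abs).add
    (continuousOn_const.mul (continuousOn_const.mul (continuousOn_sumAbs hd)))

theorem intervalIntegrable_driftMajorant (hd : ∀ i, ContinuousOn (d i) (Icc s T)) (i : ι) {t : ℝ}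
    (ht : t ∈ Icc s T) : IntervalIntegrable (driftMajorant L d i) volume s t :=
  (continuousOn_driftMajorant (fun k => (hd k).mono (Icc_subset_Icc_right ht.2)) i)
    |>.intervalIntegrable_of_Icc ht.1

theorem intervalIntegrable_meanFieldDrift (ha : ∀ i, Measurable (a i))
    (hc : ∀ i k, Measurable (c i k)) (hab : ∀ i, ∀ r ∈ Icc s T, |a i r| ≤ L)
    (hcb : ∀ i k, ∀ r ∈ Icc s T, |c i k r| ≤ L) (hd : ∀ i, ContinuousOn (d i) (Icc s T))
    (i : ι) {t : ℝ} (ht : t ∈ Icc s T) :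
    IntervalIntegrable (meanFieldDrift a c d i) volume s t := by
  have hsub : Icc s t ⊆ Icc s T := Icc_subset_Icc_right ht.2
  have hdt : ∀ k, ContinuousOn (d k) (Icc s t) := fun k => (hd k).mono hsub
  rw [intervalIntegrable_iff_integrableOn_Ioc_of_le ht.1]
  have hdom : IntegrableOn (driftMajorant L d i) (Icc s t) :=
    (continuousOn_driftMajorant hdt i).integrableOn_Icc
  have hmeas : AEStronglyMeasurable (meanFieldDrift a c d i) (volume.restrict (Ioc s t)) := by
    have hdm : ∀ k, AEMeasurable (d k) (volume.restrict (Ioc s t)) := fun k =>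
      ((hdt k).mono Ioc_subset_Icc_self).aemeasurable measurableSet_Ioc
    refine (((ha i).aemeasurable.mul (hdm i)).add (aemeasurable_const.mul ?_)).aestronglyMeasurable
    exact Finset.aemeasurable_fun_sum _ fun k _ => (hc i k).aemeasurable.mul (hdm k)
  refine (hdom.mono_set Ioc_subset_Icc_self).mono' hmeas ?_
  refine (ae_restrict_iff' measurableSet_Ioc).2 (Filter.Eventually.of_forall fun r hr => ?_)
  exact abs_meanFieldDrift_le hab hcb i (hsub (Ioc_subset_Icc_self hr))

variable (ha : ∀ i, Measurable (a i)) (hc : ∀ i k, Measurable (c i k))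
  (hab : ∀ i, ∀ r ∈ Icc s T, |a i r| ≤ L) (hcb : ∀ i k, ∀ r ∈ Icc s T, |c i k r| ≤ L)
  (hd : ∀ i, ContinuousOn (d i) (Icc s T))
  (hvolterra : ∀ i, ∀ t ∈ Icc s T, d i t = x₀ i + ∫ r in s..t, meanFieldDrift a c d i r)
include ha hc hab hcb hd hvolterra

theorem abs_le_add_integral_of_volterra (i : ι) {t : ℝ} (ht : t ∈ Icc s T) :
    |d i t| ≤ |x₀ i| + ∫ r in s..t, driftMajorant L d i r := by
  have hsub : Icc s t ⊆ Icc s T := Icc_subset_Icc_right ht.2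
  rw [hvolterra i t ht]
  refine (abs_add_le _ _).trans (add_le_add_right ?_ _)
  refine (intervalIntegral.abs_integral_le_integral_abs ht.1).trans ?_
  exact intervalIntegral.integral_mono_on ht.1
    (intervalIntegrable_meanFieldDrift ha hc hab hcb hd i ht).abs
    (intervalIntegrable_driftMajorant hd i ht)
    fun r hr => abs_meanFieldDrift_le hab hcb i (hsub hr)

theorem sumAbs_le_mul_exp (hL : 0 ≤ L) :
    ∀ t ∈ Icc s T, sumAbs d t ≤ (∑ i, |x₀ i|) * exp (2 * L * (t - s)) := by
  refine le_mul_exp_of_le_add_mul_integral (by positivity) (continuousOn_sumAbs hd) fun t ht => ?_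
  have hsub : Icc s t ⊆ Icc s T := Icc_subset_Icc_right ht.2
  have hdt : ∀ k, ContinuousOn (d k) (Icc s t) := fun k => (hd k).mono hsub
  calc sumAbs d t ≤ ∑ i, (|x₀ i| + ∫ r in s..t, driftMajorant L d i r) :=
        Finset.sum_le_sum fun i _ => abs_le_add_integral_of_volterra ha hc hab hcb hd hvolterra i ht
    _ = ∑ i, |x₀ i| + ∫ r in s..t, ∑ i, driftMajorant L d i r := by
        rw [Finset.sum_add_distrib, intervalIntegral.integral_finsetSum fun i _ =>
          intervalIntegrable_driftMajorant hd i ht]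
    _ ≤ ∑ i, |x₀ i| + ∫ r in s..t, 2 * L * sumAbs d r := by
        gcongr
        refine intervalIntegral.integral_mono_on ht.1
          ((continuousOn_finsetSum _ fun i _ => continuousOn_driftMajorant hdt i)
            |>.intervalIntegrable_of_Icc ht.1)
          ((continuousOn_sumAbs hdt).intervalIntegrable_of_Icc ht.1 |>.const_mul _)
          fun r _ => sum_driftMajorant_le hL r
    _ = ∑ i, |x₀ i| + 2 * L * ∫ r in s..t, sumAbs d r := by
        rw [intervalIntegral.integral_const_mul]

theorem abs_le_of_sumAbs_le (hL : 0 ≤ L) {M : ℝ} (hM : ∀ r ∈ Icc s T, sumAbs d r ≤ M) (i : ι) :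
    ∀ t ∈ Icc s T,
      |d i t| ≤ (|x₀ i| + L * ((Fintype.card ι : ℝ)⁻¹ * M) * (T - s)) * exp (L * (t - s)) := by
  refine le_mul_exp_of_le_add_mul_integral hL (hd i).abs fun t ht => ?_
  set m := (Fintype.card ι : ℝ)⁻¹ * M
  have hm : 0 ≤ m := mul_nonneg (by positivity) ((sumAbs_nonneg d t).trans (hM t ht))
  have hsub : Icc s t ⊆ Icc s T := Icc_subset_Icc_right ht.2
  have habs : IntervalIntegrable (fun r => |d i r|) volume s t :=
    ((hd i).abs.mono hsub).intervalIntegrable_of_Icc ht.1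
  calc |d i t| ≤ |x₀ i| + ∫ r in s..t, driftMajorant L d i r :=
        abs_le_add_integral_of_volterra ha hc hab hcb hd hvolterra i ht
    _ ≤ |x₀ i| + ∫ r in s..t, (L * |d i r| + L * m) := by
        gcongr
        refine intervalIntegral.integral_mono_on ht.1 (intervalIntegrable_driftMajorant hd i ht)
          (habs.const_mul L |>.add intervalIntegrable_const) fun r hr => ?_
        unfold driftMajorant
        gcongr
        exact mul_le_mul_of_nonneg_left (hM r (hsub hr)) (by positivity)
    _ = |x₀ i| + L * m * (t - s) + L * ∫ r in s..t, |d i r| := by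
        rw [intervalIntegral.integral_add (habs.const_mul L) intervalIntegrable_const,
          intervalIntegral.integral_const_mul, intervalIntegral.integral_const, smul_eq_mul]
        ring
    _ ≤ |x₀ i| + L * m * (T - s) + L * ∫ r in s..t, |d i r| := by
        gcongr
        exact ht.2

end MeanFieldSystem

theorem statement3_general (σ L T : ℝ) (hL : 0 ≤ L) (hT : 0 ≤ T) :
    ∃ C : ℝ,
      ∀ (N : ℕ), 0 < N → ∀ (s : ℝ), 0 ≤ s → s ≤ T → ∀ (j : Fin N)
        (a : Fin N → ℝ → ℝ) (c : Fin N → Fin N → ℝ → ℝ) (d : Fin N → ℝ → ℝ),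
        (∀ i, Measurable (a i)) →
        (∀ i k, Measurable (c i k)) →
        (∀ i, ∀ r ∈ Set.Icc s T, |a i r| ≤ L) →
        (∀ i k, ∀ r ∈ Set.Icc s T, |c i k r| ≤ L) →
        (∀ i, ContinuousOn (d i) (Set.Icc s T)) →
        (∀ i, ∀ t ∈ Set.Icc s T,
          d i t = (if i = j then σ else 0)
            + ∫ r in s..t, (a i r * d i r + (N : ℝ)⁻¹ * ∑ k, c i k r * d k r)) →
        (∀ t ∈ Set.Icc s T, (N : ℝ)⁻¹ * ∑ i, |d i t| ≤ C / N) ∧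
        (∀ t ∈ Set.Icc s T, |d j t| ≤ C) ∧
        (∀ i, i ≠ j → ∀ t ∈ Set.Icc s T, |d i t| ≤ C / N) := by
  set M := |σ| * exp (2 * L * T)
  have hM : 0 ≤ M := by positivity
  have hσM : |σ| ≤ M := le_mul_of_one_le_right (abs_nonneg σ) (one_le_exp (by positivity))
  refine ⟨(M + L * M * T) * exp (L * T), fun N hN s hs hsT j a c d ha hc hab hcb hd heq => ?_⟩
  have hvolterra : ∀ i, ∀ t ∈ Icc s T, d i t =
      (fun k => if k = j then σ else 0) i + ∫ r in s..t, meanFieldDrift a c d i r := by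
    simpa only [meanFieldDrift, Fintype.card_fin] using heq
  have hsumAbs : ∀ t ∈ Icc s T, sumAbs d t ≤ M := fun t ht => by
    refine (sumAbs_le_mul_exp ha hc hab hcb hd hvolterra hL t ht).trans ?_
    simp only [apply_ite abs, abs_zero, Finset.sum_ite_eq', Finset.mem_univ, if_true]
    show _ ≤ |σ| * exp (2 * L * T)
    gcongr
    linarith [ht.2]
  have hd_le : ∀ i, ∀ t ∈ Icc s T,
      |d i t| ≤ (|if i = j then σ else 0| + L * ((N : ℝ)⁻¹ * M) * T) * exp (L * T) :=
    fun i t ht => by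
      refine (abs_le_of_sumAbs_le ha hc hab hcb hd hvolterra hL hsumAbs i t ht).trans ?_
      simp only [Fintype.card_fin]
      gcongr <;> linarith [ht.2]
  have hN : (N : ℝ)⁻¹ ≤ 1 := inv_le_one_of_one_le₀ (by exact_mod_cast hN)
  refine ⟨fun t ht => ?_, fun t ht => ?_, fun i hij t ht => ?_⟩
  · rw [inv_mul_eq_div]
    gcongr
    calc sumAbs d t ≤ M := hsumAbs t ht
      _ ≤ M + L * M * T := le_add_of_nonneg_right (by positivity)
      _ ≤ (M + L * M * T) * exp (L * T) :=
        le_mul_of_one_le_right (by positivity) (one_le_exp (by positivity))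
  · refine (hd_le j t ht).trans ?_
    rw [if_pos rfl]
    gcongr
    exact mul_le_of_le_one_left hM hN
  · calc |d i t| ≤ (0 + L * ((N : ℝ)⁻¹ * M) * T) * exp (L * T) := by
          simpa only [if_neg hij, abs_zero] using hd_le i t ht
      _ = L * M * T * exp (L * T) / N := by ring
      _ ≤ (M + L * M * T) * exp (L * T) / N := by gcongr; exact le_add_of_nonneg_left hM

/-- a priori bounds for the linear Volterra system characterizing the
Malliavin derivatives `D_s^j X^{i,N}_t` of the interacting particle system.  The constant `C`
depends only on `σ`, `L` and `T` (not on `N`, `s` or `j`). -/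
theorem statement3 (σ L T : ℝ) (hσ : 0 < σ) (hL : 0 ≤ L) (hT : 0 ≤ T) :
    ∃ C : ℝ,
      ∀ (N : ℕ), 0 < N → ∀ (s : ℝ), 0 ≤ s → s ≤ T → ∀ (j : Fin N)
        (a : Fin N → ℝ → ℝ) (c : Fin N → Fin N → ℝ → ℝ) (d : Fin N → ℝ → ℝ),
        (∀ i, Measurable (a i)) →
        (∀ i k, Measurable (c i k)) →
        (∀ i, ∀ r ∈ Set.Icc s T, |a i r| ≤ L) →
        (∀ i k, ∀ r ∈ Set.Icc s T, |c i k r| ≤ L) →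
        (∀ i, ContinuousOn (d i) (Set.Icc s T)) →
        (∀ i, ∀ t ∈ Set.Icc s T,
          d i t = (if i = j then σ else 0)
            + ∫ r in s..t, (a i r * d i r + (N : ℝ)⁻¹ * ∑ k, c i k r * d k r)) →
        (∀ t ∈ Set.Icc s T, (N : ℝ)⁻¹ * ∑ i, |d i t| ≤ C / N) ∧
        (∀ t ∈ Set.Icc s T, |d j t| ≤ C) ∧
        (∀ i, i ≠ j → ∀ t ∈ Set.Icc s T, |d i t| ≤ C / N) :=
  statement3_general σ L T hL hT
end

section
/- Fix N ∈ ℕ, j ∈ {1,…,N}, T > 0, σ > 0, L ≥ 0, and measurable a^i, c^{i,k} : [0,T] → ℝ with |a^i(r)| ≤ L and |c^{i,k}(r)| ≤ L for all i,k,r. For each u ∈ [0,T] let d_u¹,…,d_u^N : [u,T] → ℝ be continuous functions satisfying d_u^i(t) = σ·1_{i=j} + ∫_u^t ( a^i(r) d_u^i(r) + N^{−1} ∑_{k=1}^N c^{i,k}(r) d_u^k(r) ) dr. Then there exists a constant C depending only on σ, L, T such that for all i ∈ {1,…,N} and all 0 ≤ v ≤ u ≤ s ≤ t ≤ T: |d_u^i(t)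 − d_v^i(t)| ≤ C|u−v|(1_{i=j} + 1/N); |d_u^i(t) − d_u^i(s)| ≤ C|t−s|(1_{i=j} + 1/N); and |d_u^i(t) − d_v^i(t) − d_u^i(s) + d_v^i(s)| ≤ C(1 ∧ |u−v|)(1 ∧ |t−s|)(1_{i=j} + 1/N). -/
open MeasureTheory Set Real

/-!
With the weights `w_i = 1_{i=j} + 1/N`, which sum to `2`, the drift of the system at a state
`g` is bounded by `3 L w_i m`, where `m = max_k |g_k| / w_k`. Hence Grönwall's inequality for
`m` bounds a solution whose datum is at most `β w_i` by `β e^{3L(t-u)} w_i`, and its increments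
by `3 L β e^{3LT} w_i (t - s)`. The difference `d_u - d_v` solves the same linear system on
`[u, T]` with datum `d_v(v) - d_v(u)`, an increment of `d_v` of size `O((u - v) w_i)`; the two
bounds applied to it give the first and the third estimate.
-/

theorem le_mul_exp_of_le_add_integral {f : ℝ → ℝ} {u b A K : ℝ} (hK : 0 ≤ K)
    (hf : ContinuousOn f (Icc u b)) (h : ∀ t ∈ Icc u b, f t ≤ A + ∫ r in u..t, K * f r) :
    ∀ t ∈ Icc u b, f t ≤ A * exp (K * (t - u)) := by
  rcases lt_or_ge b u with hbu | hub
  · simp [Icc_eq_empty_of_lt hbu]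
  -- Extending `f` continuously to `ℝ` makes `A + ∫ K f` differentiable everywhere.
  set F := IccExtend hub ((Icc u b).domRestrict f)
  have hF : Continuous F :=
    continuous_IccExtend_iff.2 (continuousOn_iff_continuous_domRestrict.1 hf)
  have hFf : EqOn F f (Icc u b) := fun x hx => IccExtend_of_mem hub _ hx
  set φ := fun t => A + ∫ r in u..t, K * F r
  have hφ : ∀ x, HasDerivAt φ (K * F x) x := fun x =>
    ((hF.const_mul K).integral_hasStrictDerivAt u x).hasDerivAt.const_add A
  have hfφ : ∀ t ∈ Icc u b, f t ≤ φ t := fun t ht => by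
    refine (h t ht).trans_eq ?_
    congr 1
    refine intervalIntegral.integral_congr fun r hr => ?_
    rw [uIcc_of_le ht.1] at hr
    simp only [hFf ⟨hr.1, hr.2.trans ht.2⟩]
  intro t ht
  have := le_gronwallBound_of_liminf_deriv_right_le (f := φ) (δ := A) (ε := 0)
    (continuous_iff_continuousAt.2 fun x => (hφ x).continuousAt).continuousOn
    (fun x _ r hr => (hφ x).hasDerivWithinAt.liminf_right_slope_le hr) (by simp [φ])
    (fun x hx => by
      rw [add_zero, hFf (Ico_subset_Icc_self hx)]
      exact mul_le_mul_of_nonneg_left (hfφ x (Ico_subset_Icc_self hx)) hK) t ht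
  rw [gronwallBound_ε0] at this
  exact (hfφ t ht).trans this

namespace LinearVolterra

variable {N : ℕ} {a : Fin N → ℝ → ℝ} {c : Fin N → Fin N → ℝ → ℝ} {g h : Fin N → ℝ → ℝ}
  {L u v T β : ℝ} {S : Set ℝ}

noncomputable def drift (a : Fin N → ℝ → ℝ) (c : Fin N → Fin N → ℝ → ℝ) (g : Fin N → ℝ → ℝ)
    (i : Fin N) (r : ℝ) : ℝ :=
  a i r * g i r + (N : ℝ)⁻¹ * ∑ k, c i k r * g k r

lemma drift_sub (i : Fin N) (r : ℝ) :
    drift a c (g - h) i r = drift a c g i r - drift a c h i r := by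
  simp only [drift, Pi.sub_apply, mul_sub, Finset.sum_sub_distrib]
  ring

structure CoeffBound (L : ℝ) (S : Set ℝ) (a : Fin N → ℝ → ℝ) (c : Fin N → Fin N → ℝ → ℝ) :
    Prop where
  measurable_a : ∀ i, Measurable (a i)
  measurable_c : ∀ i k, Measurable (c i k)
  abs_a_le : ∀ i, ∀ r ∈ S, |a i r| ≤ L
  abs_c_le : ∀ i k, ∀ r ∈ S, |c i k r| ≤ L

lemma CoeffBound.mono {S' : Set ℝ} (hcoef : CoeffBound L S a c) (hS : S' ⊆ S) :
    CoeffBound L S' a c :=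
  ⟨hcoef.measurable_a, hcoef.measurable_c, fun i r hr => hcoef.abs_a_le i r (hS hr),
    fun i k r hr => hcoef.abs_c_le i k r (hS hr)⟩

lemma integrableOn_Icc_mul_of_abs_le {f φ : ℝ → ℝ} (hf : Measurable f)
    (hfL : ∀ r ∈ Icc u T, |f r| ≤ L) (hφ : ContinuousOn φ (Icc u T)) : IntegrableOn (fun r => f r * φ r) (Icc u T) :=
  (Measure.integrableOn_of_bounded measure_Icc_lt_top.ne hf.aestronglyMeasurable
    (ae_restrict_of_forall_mem measurableSet_Icc hfL)).mul_continuousOn hφ isCompact_Icc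

lemma CoeffBound.integrableOn_drift (hcoef : CoeffBound L (Icc u T) a c)
    (hg : ∀ k, ContinuousOn (g k) (Icc u T)) (i : Fin N) :
    IntegrableOn (drift a c g i) (Icc u T) :=
  (integrableOn_Icc_mul_of_abs_le (hcoef.measurable_a i) (hcoef.abs_a_le i) (hg i)).add
    ((integrable_finsetSum _ fun k _ => integrableOn_Icc_mul_of_abs_le (hcoef.measurable_c i k)
      (hcoef.abs_c_le i k) (hg k)).const_mul _)

structure IsSolution (a : Fin N → ℝ → ℝ) (c : Fin N → Fin N → ℝ → ℝ) (u T : ℝ)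
    (g : Fin N → ℝ → ℝ) : Prop where
  continuousOn : ∀ i, ContinuousOn (g i) (Icc u T)
  eq_add_integral : ∀ i, ∀ t ∈ Icc u T, g i t = g i u + ∫ r in u..t, drift a c g i r

lemma IsSolution.intervalIntegrable_drift (hg : IsSolution a c u T g)
    (hcoef : CoeffBound L (Icc u T) a c) (i : Fin N) {s t : ℝ} (hs : s ∈ Icc u T)
    (ht : t ∈ Icc u T) : IntervalIntegrable (drift a c g i) volume s t :=
  ((hcoef.integrableOn_drift hg.continuousOn i).mono_set (uIcc_subset_Icc hs ht)).intervalIntegrable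

lemma IsSolution.sub_eq_integral (hg : IsSolution a c u T g) (hcoef : CoeffBound L (Icc u T) a c)
    (i : Fin N) {s t : ℝ} (hs : s ∈ Icc u T) (ht : t ∈ Icc u T) :
    g i t - g i s = ∫ r in s..t, drift a c g i r := by
  have hu : u ∈ Icc u T := ⟨le_rfl, hs.1.trans hs.2⟩
  rw [hg.eq_add_integral i t ht, hg.eq_add_integral i s hs, add_sub_add_left_eq_sub,
    intervalIntegral.integral_interval_sub_left (hg.intervalIntegrable_drift hcoef i hu ht)
      (hg.intervalIntegrable_drift hcoef i hu hs)]

lemma IsSolution.mono (hg : IsSolution a c v T g) (hcoef : CoeffBound L (Icc v T) a c)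
    (hu : u ∈ Icc v T) : IsSolution a c u T g where
  continuousOn i := (hg.continuousOn i).mono (Icc_subset_Icc_left hu.1)
  eq_add_integral i t ht := by
    rw [← hg.sub_eq_integral hcoef i hu ⟨hu.1.trans ht.1, ht.2⟩, add_sub_cancel]

lemma IsSolution.sub (hg : IsSolution a c u T g) (hh : IsSolution a c u T h)
    (hcoef : CoeffBound L (Icc u T) a c) : IsSolution a c u T (g - h) where
  continuousOn i := (hg.continuousOn i).sub (hh.continuousOn i)
  eq_add_integral i t ht := by
    have hu : u ∈ Icc u T := ⟨le_rfl, ht.1.trans ht.2⟩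
    simp only [drift_sub, Pi.sub_apply]
    rw [intervalIntegral.integral_sub (hg.intervalIntegrable_drift hcoef i hu ht)
      (hh.intervalIntegrable_drift hcoef i hu ht), hg.eq_add_integral i t ht,
      hh.eq_add_integral i t ht]
    ring

noncomputable def weight (j i : Fin N) : ℝ := (if i = j then 1 else 0) + 1 / N

lemma one_div_le_weight (j i : Fin N) : 1 / (N : ℝ) ≤ weight j i := by
  unfold weight
  split_ifs <;> linarith

lemma weight_pos (j i : Fin N) : 0 < weight j i :=
  (one_div_pos.2 (Nat.cast_pos.2 i.pos)).trans_le (one_div_le_weight j i)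

lemma sum_weight (j : Fin N) : ∑ k, weight j k = 2 := by
  have hN : (N : ℝ) ≠ 0 := Nat.cast_ne_zero.2 j.pos.ne'
  simp only [weight, Finset.sum_add_distrib, Finset.sum_ite_eq', Finset.mem_univ, if_true,
    Finset.sum_const, Finset.card_univ, Fintype.card_fin, nsmul_eq_mul]
  field_simp
  norm_num

lemma abs_drift_le {j i : Fin N} {r M : ℝ} (ha : |a i r| ≤ L) (hc : ∀ k, |c i k r| ≤ L)
    (hg : ∀ k, |g k r| ≤ M * weight j k) : |drift a c g i r| ≤ 3 * L * M * weight j i := by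
  have hL : 0 ≤ L := (abs_nonneg _).trans ha
  have hM : 0 ≤ M := nonneg_of_mul_nonneg_left ((abs_nonneg _).trans (hg i)) (weight_pos j i)
  have hsum : |∑ k, c i k r * g k r| ≤ 2 * L * M := calc
    |∑ k, c i k r * g k r| ≤ ∑ k, L * (M * weight j k) :=
      (Finset.abs_sum_le_sum_abs _ _).trans <| Finset.sum_le_sum fun k _ => by
        rw [abs_mul]; exact mul_le_mul (hc k) (hg k) (abs_nonneg _) hL
    _ = 2 * L * M := by rw [← Finset.mul_sum, ← Finset.mul_sum, sum_weight]; ring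
  have hmean : (N : ℝ)⁻¹ * (2 * L * M) ≤ 2 * L * M * weight j i := by
    rw [mul_comm, ← div_eq_mul_inv, div_eq_mul_one_div]
    exact mul_le_mul_of_nonneg_left (one_div_le_weight j i) (by positivity)
  calc |drift a c g i r|
      ≤ |a i r| * |g i r| + (N : ℝ)⁻¹ * |∑ k, c i k r * g k r| := by
        refine (abs_add_le _ _).trans_eq ?_
        rw [abs_mul, abs_mul, abs_inv, Nat.abs_cast]
    _ ≤ L * (M * weight j i) + (N : ℝ)⁻¹ * (2 * L * M) := by
        gcongr; exact hg i
    _ ≤ 3 * L * M * weight j i := by linarith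

lemma IsSolution.abs_le (hg : IsSolution a c u T g) (hcoef : CoeffBound L (Icc u T) a c)
    (hL : 0 ≤ L) {j : Fin N} (hinit : ∀ k, |g k u| ≤ β * weight j k) (i : Fin N) {t : ℝ}
    (ht : t ∈ Icc u T) : |g i t| ≤ β * exp (3 * L * (t - u)) * weight j i := by
  set m : ℝ → ℝ := fun t =>
    Finset.univ.sup' ⟨j, Finset.mem_univ _⟩ fun k => |g k t| / weight j k
  have hm : ContinuousOn m (Icc u T) :=
    ContinuousOn.finset_sup'_apply _ fun k _ => (hg.continuousOn k).abs.div_const _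
  have hgm : ∀ k t, |g k t| ≤ m t * weight j k := fun k t =>
    (div_le_iff₀ (weight_pos j k)).1 <|
      Finset.le_sup' (fun k => |g k t| / weight j k) (Finset.mem_univ k)
  have hgron : ∀ t ∈ Icc u T, m t ≤ β + ∫ r in u..t, 3 * L * m r := by
    intro t ht
    refine Finset.sup'_le _ _ fun k _ => (div_le_iff₀ (weight_pos j k)).2 ?_
    have hint : |∫ r in u..t, drift a c g k r| ≤ (∫ r in u..t, 3 * L * m r) * weight j k := by
      rw [← intervalIntegral.integral_mul_const, ← Real.norm_eq_abs]
      refine intervalIntegral.norm_integral_le_of_norm_le ht.1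
        (Filter.Eventually.of_forall fun r hr => ?_) ?_
      · have hr' : r ∈ Icc u T := ⟨hr.1.le, hr.2.trans ht.2⟩
        exact abs_drift_le (hcoef.abs_a_le k r hr') (fun l => hcoef.abs_c_le k l r hr')
          (fun l => hgm l r)
      · refine ContinuousOn.intervalIntegrable ?_
        rw [uIcc_of_le ht.1]
        exact ((continuousOn_const.mul hm).mul continuousOn_const).mono
          (Icc_subset_Icc_right ht.2)
    calc |g k t| = |g k u + ∫ r in u..t, drift a c g k r| := by rw [← hg.eq_add_integral k t ht]
      _ ≤ β * weight j k + (∫ r in u..t, 3 * L * m r) * weight j k :=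
        (abs_add_le _ _).trans (add_le_add (hinit k) hint)
      _ = (β + ∫ r in u..t, 3 * L * m r) * weight j k := by ring
  exact (hgm i t).trans <| mul_le_mul_of_nonneg_right
    (le_mul_exp_of_le_add_integral (by positivity) hm hgron t ht) (weight_pos j i).le

lemma IsSolution.abs_sub_le (hg : IsSolution a c u T g) (hcoef : CoeffBound L (Icc u T) a c)
    (hL : 0 ≤ L) {j : Fin N} (hinit : ∀ k, |g k u| ≤ β * weight j k) (i : Fin N) {s t : ℝ}
    (hs : u ≤ s) (hst : s ≤ t) (ht : t ≤ T) :
    |g i t - g i s| ≤ β * (3 * L * exp (3 * L * (T - u))) * (t - s) * weight j i := by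
  have hβ : 0 ≤ β :=
    nonneg_of_mul_nonneg_left ((abs_nonneg _).trans (hinit j)) (weight_pos j j)
  have hdrift : ∀ r ∈ uIoc s t,
      ‖drift a c g i r‖ ≤ 3 * L * (β * exp (3 * L * (T - u))) * weight j i := by
    intro r hr
    rw [uIoc_of_le hst] at hr
    have hr' : r ∈ Icc u T := ⟨hs.trans hr.1.le, hr.2.trans ht⟩
    refine abs_drift_le (hcoef.abs_a_le i r hr') (fun k => hcoef.abs_c_le i k r hr') fun k => ?_
    refine (hg.abs_le hcoef hL hinit k hr').trans ?_
    have := (weight_pos j k).le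
    gcongr
    exact hr'.2
  rw [hg.sub_eq_integral hcoef i ⟨hs, hst.trans ht⟩ ⟨hs.trans hst, ht⟩]
  have := intervalIntegral.norm_integral_le_of_norm_le_const hdrift
  rw [Real.norm_eq_abs, abs_of_nonneg (sub_nonneg.2 hst)] at this
  exact this.trans_eq (by ring)

structure IsSolutionFamily (a : Fin N → ℝ → ℝ) (c : Fin N → Fin N → ℝ → ℝ) (T σ : ℝ) (j : Fin N)
    (d : ℝ → Fin N → ℝ → ℝ) : Prop where
  isSolution : ∀ w ∈ Icc 0 T, IsSolution a c w T (d w)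
  apply_self : ∀ w ∈ Icc 0 T, ∀ k, d w k w = if k = j then σ else 0

lemma IsSolutionFamily.of_eq_add_integral {σ : ℝ} {j : Fin N} {d : ℝ → Fin N → ℝ → ℝ}
    (hcont : ∀ w ∈ Icc 0 T, ∀ k, ContinuousOn (d w k) (Icc w T))
    (heq : ∀ w ∈ Icc 0 T, ∀ k, ∀ t ∈ Icc w T,
      d w k t = (if k = j then σ else 0) + ∫ r in w..t, drift a c (d w) k r) :
    IsSolutionFamily a c T σ j d := by
  have hself : ∀ w ∈ Icc 0 T, ∀ k, d w k w = if k = j then σ else 0 := fun w hw k => by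
    rw [heq w hw k w ⟨le_rfl, hw.2⟩, intervalIntegral.integral_same, add_zero]
  exact ⟨fun w hw => ⟨hcont w hw, fun k t ht => by rw [heq w hw k t ht, hself w hw k]⟩, hself⟩

section IsSolutionFamily

variable {σ : ℝ} {j : Fin N} {d : ℝ → Fin N → ℝ → ℝ}

lemma IsSolutionFamily.abs_apply_self_le (hd : IsSolutionFamily a c T σ j d) (hσ : 0 ≤ σ)
    {w : ℝ} (hw : w ∈ Icc 0 T) (k : Fin N) :
    |d w k w| ≤ σ * weight j k := by
  have : (0 : ℝ) ≤ (N : ℝ)⁻¹ := by positivity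
  rw [hd.apply_self w hw k, weight]
  split_ifs <;> simp [abs_of_nonneg hσ] <;> nlinarith

lemma IsSolutionFamily.abs_sub_le (hd : IsSolutionFamily a c T σ j d)
    (hcoef : CoeffBound L (Icc 0 T) a c) (hL : 0 ≤ L) (hσ : 0 ≤ σ) {w s t : ℝ} (hw : 0 ≤ w)
    (hws : w ≤ s) (hst : s ≤ t) (ht : t ≤ T) (i : Fin N) :
    |d w i t - d w i s| ≤ σ * (3 * L * exp (3 * L * T)) * (t - s) * weight j i := by
  have hwT : w ∈ Icc 0 T := ⟨hw, hws.trans (hst.trans ht)⟩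
  refine ((hd.isSolution w hwT).abs_sub_le (hcoef.mono (Icc_subset_Icc_left hw)) hL
    (hd.abs_apply_self_le hσ hwT) i hws hst ht).trans ?_
  have := (weight_pos j i).le
  gcongr
  linarith

lemma IsSolutionFamily.isSolution_sub (hd : IsSolutionFamily a c T σ j d)
    (hcoef : CoeffBound L (Icc 0 T) a c) {u v : ℝ} (hv : 0 ≤ v) (hvu : v ≤ u) (hu : u ≤ T) :
    IsSolution a c u T (d u - d v) :=
  (hd.isSolution u ⟨hv.trans hvu, hu⟩).sub
    ((hd.isSolution v ⟨hv, hvu.trans hu⟩).mono (hcoef.mono (Icc_subset_Icc_left hv)) ⟨hvu, hu⟩)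
    (hcoef.mono (Icc_subset_Icc_left (hv.trans hvu)))

lemma IsSolutionFamily.abs_sub_apply_start_le (hd : IsSolutionFamily a c T σ j d)
    (hcoef : CoeffBound L (Icc 0 T) a c) (hL : 0 ≤ L) (hσ : 0 ≤ σ) {u v : ℝ} (hv : 0 ≤ v)
    (hvu : v ≤ u) (hu : u ≤ T) (k : Fin N) :
    |(d u - d v) k u| ≤ σ * (3 * L * exp (3 * L * T)) * (u - v) * weight j k := by
  rw [Pi.sub_apply, Pi.sub_apply, hd.apply_self u ⟨hv.trans hvu, hu⟩ k,
    ← hd.apply_self v ⟨hv, hvu.trans hu⟩ k, abs_sub_comm]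
  exact hd.abs_sub_le hcoef hL hσ hv le_rfl hvu hu k

lemma IsSolutionFamily.abs_sub_start_le (hd : IsSolutionFamily a c T σ j d)
    (hcoef : CoeffBound L (Icc 0 T) a c) (hL : 0 ≤ L) (hσ : 0 ≤ σ) {u v t : ℝ} (hv : 0 ≤ v)
    (hvu : v ≤ u) (hut : u ≤ t) (ht : t ≤ T) (i : Fin N) :
    |d u i t - d v i t| ≤
      σ * (3 * L * exp (3 * L * T)) * (u - v) * exp (3 * L * T) * weight j i := by
  refine ((hd.isSolution_sub hcoef hv hvu (hut.trans ht)).abs_le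
    (hcoef.mono (Icc_subset_Icc_left (hv.trans hvu))) hL
    (hd.abs_sub_apply_start_le hcoef hL hσ hv hvu (hut.trans ht)) i ⟨hut, ht⟩).trans ?_
  have := (weight_pos j i).le
  gcongr
  linarith

lemma IsSolutionFamily.abs_sub_sub_le (hd : IsSolutionFamily a c T σ j d)
    (hcoef : CoeffBound L (Icc 0 T) a c) (hL : 0 ≤ L) (hσ : 0 ≤ σ) {u v s t : ℝ} (hv : 0 ≤ v)
    (hvu : v ≤ u) (hus : u ≤ s) (hst : s ≤ t) (ht : t ≤ T) (i : Fin N) :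
    |d u i t - d v i t - d u i s + d v i s| ≤
      σ * (3 * L * exp (3 * L * T)) * (u - v) * (3 * L * exp (3 * L * T)) * (t - s) *
        weight j i := by
  have huT : u ≤ T := hus.trans (hst.trans ht)
  rw [sub_add]
  refine ((hd.isSolution_sub hcoef hv hvu huT).abs_sub_le
    (hcoef.mono (Icc_subset_Icc_left (hv.trans hvu))) hL
    (hd.abs_sub_apply_start_le hcoef hL hσ hv hvu huT) i hus hst ht).trans ?_
  have := (weight_pos j i).le
  gcongr
  linarith

end IsSolutionFamily

end LinearVolterra

lemma le_max_one_mul_min_one {x T : ℝ} (hx : 0 ≤ x) (hxT : x ≤ T) : x ≤ max 1 T * min 1 x := by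
  rcases le_total x 1 with h | h
  · rw [min_eq_right h]
    exact le_mul_of_one_le_left hx (le_max_left 1 T)
  · rw [min_eq_left h, mul_one]
    exact hxT.trans (le_max_right 1 T)

lemma mul_le_max_one_sq_mul_min_one {x y T : ℝ} (hx : 0 ≤ x) (hxT : x ≤ T) (hy : 0 ≤ y)
    (hyT : y ≤ T) : x * y ≤ max 1 T ^ 2 * (min 1 x * min 1 y) := by
  rw [sq, mul_mul_mul_comm]
  exact mul_le_mul (le_max_one_mul_min_one hx hxT) (le_max_one_mul_min_one hy hyT) hy
    (by positivity)

open LinearVolterra in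
theorem statement5_general (T σ L : ℝ) (hσ : 0 < σ) (hL : 0 ≤ L) :
    ∃ C : ℝ,
      ∀ (N : ℕ), 0 < N → ∀ (j : Fin N)
        (a : Fin N → ℝ → ℝ) (c : Fin N → Fin N → ℝ → ℝ),
        (∀ i, Measurable (a i)) →
        (∀ i k, Measurable (c i k)) →
        (∀ i, ∀ r ∈ Set.Icc (0 : ℝ) T, |a i r| ≤ L) →
        (∀ i k, ∀ r ∈ Set.Icc (0 : ℝ) T, |c i k r| ≤ L) →
        ∀ (d : ℝ → Fin N → ℝ → ℝ),
        (∀ u ∈ Set.Icc (0 : ℝ) T, ∀ i, ContinuousOn (d u i) (Set.Icc u T)) →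
        (∀ u ∈ Set.Icc (0 : ℝ) T, ∀ i, ∀ t ∈ Set.Icc u T,
          d u i t = (if i = j then σ else 0)
            + ∫ r in u..t, (a i r * d u i r + (N : ℝ)⁻¹ * ∑ k, c i k r * d u k r)) →
        ∀ i : Fin N, ∀ v u s t : ℝ, 0 ≤ v → v ≤ u → u ≤ s → s ≤ t → t ≤ T →
          |d u i t - d v i t|
              ≤ C * |u - v| * ((if i = j then 1 else 0) + 1 / N) ∧
          |d u i t - d u i s|
              ≤ C * |t - s| * ((if i = j then 1 else 0) + 1 / N) ∧
          |d u i t - d v i t - d u i s + d v i s|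
              ≤ C * (min 1 |u - v|) * (min 1 |t - s|) * ((if i = j then 1 else 0) + 1 / N) := by
  set K := exp (3 * L * T)
  set B := 3 * L * K
  set D := (1 + K + B) * max 1 T ^ 2
  have hD : 1 ≤ D ∧ K ≤ D ∧ B * max 1 T ^ 2 ≤ D := by
    have : 1 ≤ max 1 T ^ 2 := one_le_pow₀ (le_max_left 1 T)
    refine ⟨?_, ?_, ?_⟩ <;> nlinarith [exp_pos (3 * L * T), mul_nonneg hL (exp_pos (3 * L * T)).le]
  refine ⟨σ * B * D, fun N _ j a c ha hc haL hcL d hcont heq i v u s t hv hvu hus hst htT => ?_⟩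
  have hcoef : CoeffBound L (Icc 0 T) a c := ⟨ha, hc, haL, hcL⟩
  have hd : IsSolutionFamily a c T σ j d := .of_eq_add_integral hcont heq
  have huv : |u - v| = u - v := abs_of_nonneg (sub_nonneg.2 hvu)
  have hts : |t - s| = t - s := abs_of_nonneg (sub_nonneg.2 hst)
  rw [show (if i = j then (1 : ℝ) else 0) + 1 / N = weight j i from rfl]
  have := (weight_pos j i).le
  refine ⟨?_, ?_, ?_⟩
  · calc _ ≤ σ * B * |u - v| * K * weight j i := by
          rw [huv]; exact hd.abs_sub_start_le hcoef hL hσ.le hv hvu (hus.trans hst) htT i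
      _ = σ * B * K * |u - v| * weight j i := by ring
      _ ≤ _ := by gcongr; exact hD.2.1
  · calc _ ≤ σ * B * 1 * |t - s| * weight j i := by
          rw [hts, mul_one]; exact hd.abs_sub_le hcoef hL hσ.le (hv.trans hvu) hus hst htT i
      _ ≤ _ := by gcongr; exact hD.1
  · calc _ ≤ σ * B * B * (|u - v| * |t - s|) * weight j i := by
          rw [huv, hts]
          exact (hd.abs_sub_sub_le hcoef hL hσ.le hv hvu hus hst htT i).trans_eq (by ring)
      _ ≤ σ * B * B * (max 1 T ^ 2 * (min 1 |u - v| * min 1 |t - s|)) * weight j i := by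
          gcongr σ * B * B * ?_ * _
          exact mul_le_max_one_sq_mul_min_one (abs_nonneg _) (by rw [huv]; linarith)
            (abs_nonneg _) (by rw [hts]; linarith)
      _ = σ * B * (B * max 1 T ^ 2) * min 1 |u - v| * min 1 |t - s| * weight j i := by ring
      _ ≤ _ := by gcongr; exact hD.2.2

/-- regularity in both variables of the solutions `d_u^i(t)` of the family of
linear Volterra systems characterizing `D_u^j X^{i,N}_t` for the interacting particle system.
The constant `C` depends only on `σ`, `L`, `T`. -/
theorem statement5 (T σ L : ℝ) (hT : 0 < T) (hσ : 0 < σ) (hL : 0 ≤ L) :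
    ∃ C : ℝ,
      ∀ (N : ℕ), 0 < N → ∀ (j : Fin N)
        (a : Fin N → ℝ → ℝ) (c : Fin N → Fin N → ℝ → ℝ),
        (∀ i, Measurable (a i)) →
        (∀ i k, Measurable (c i k)) →
        (∀ i, ∀ r ∈ Set.Icc (0 : ℝ) T, |a i r| ≤ L) →
        (∀ i k, ∀ r ∈ Set.Icc (0 : ℝ) T, |c i k r| ≤ L) →
        ∀ (d : ℝ → Fin N → ℝ → ℝ),
        (∀ u ∈ Set.Icc (0 : ℝ) T, ∀ i, ContinuousOn (d u i) (Set.Icc u T)) →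
        (∀ u ∈ Set.Icc (0 : ℝ) T, ∀ i, ∀ t ∈ Set.Icc u T,
          d u i t = (if i = j then σ else 0)
            + ∫ r in u..t, (a i r * d u i r + (N : ℝ)⁻¹ * ∑ k, c i k r * d u k r)) →
        ∀ i : Fin N, ∀ v u s t : ℝ, 0 ≤ v → v ≤ u → u ≤ s → s ≤ t → t ≤ T →
          |d u i t - d v i t|
              ≤ C * |u - v| * ((if i = j then 1 else 0) + 1 / N) ∧
          |d u i t - d u i s|
              ≤ C * |t - s| * ((if i = j then 1 else 0) + 1 / N) ∧
          |d u i t - d v i t - d u i s + d v i s|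
              ≤ C * (min 1 |u - v|) * (min 1 |t - s|) * ((if i = j then 1 else 0) + 1 / N) :=
  statement5_general T σ L hσ hL
end
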